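/- With the setup of bit-width reduction quantization (b' < b, x ≥ 0, x_q and x'_q the b-bit and b'-bit clipped rounded quantizations with step size s > 0, and λ = x_q - x'_q), if round(x/s) > 2^{b'} - 1 and x/s ≠ 2^{b'} - 1/2, then the quantization error strictly increases: (x - x'_q)² > (x - x_q)². -/
import Mathlib


theorem bit_reduction_error_strictly_increases
    (b b' : ℕ) (hb' : 0 < b') (hbb : b' < b)
    (s x : ℝ) (hs : 0 < s) (hx : 0 ≤ x)
    (hround : round (x / s) > 2 ^ b' - 1)
    (hne : x / s ≠ 2 ^ b' - 1/2) :
    (x - s * ((min (max (round (x / s)) 0) (2 ^ b' - 1) : ℤ) : ℝ))^2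
      > (x - s * ((min (max (round (x / s)) 0) (2 ^ b - 1) : ℤ) : ℝ))^2 := by
  set r : ℤ := round (x / s) with hr
  have hb2 : (2:ℤ) ^ b' ≤ r := by linarith
  have h2pos : (1:ℤ) ≤ 2 ^ b' := by exact_mod_cast Nat.one_le_two_pow
  have h2R : (0:ℝ) < 2 ^ b' := by positivity
  have hr0 : (0:ℤ) ≤ r := by linarith
  have hmax : max r 0 = r := max_eq_left hr0
  have hmin' : min r (2 ^ b' - 1) = 2 ^ b' - 1 := min_eq_right (by linarith)
  rw [hmax, hmin']
  have habs : |x / s - (r : ℝ)| ≤ 1 / 2 := by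
    have := abs_sub_round (x / s)
    simpa [hr] using this
  have hrR : (2:ℝ) ^ b' ≤ (r : ℝ) := by exact_mod_cast hb2
  have hu1 : x / s ≥ (r : ℝ) - 1 / 2 := by
    have := abs_le.mp habs
    linarith [this.1]
  have hu2 : x / s ≤ (r : ℝ) + 1 / 2 := by
    have := abs_le.mp habs
    linarith [(abs_le.mp habs).2]
  have hA : x / s > 2 ^ b' - 1 / 2 := by
    rcases lt_or_eq_of_le (show (2:ℝ) ^ b' - 1/2 ≤ x / s by linarith) with h | h
    · exact h
    · exact absurd h.symm hne
  have hxs : x = s * (x / s) := by field_simp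
  have hble : (2:ℤ) ^ (b' + 1) ≤ 2 ^ b := pow_le_pow_right₀ (by norm_num) hbb
  have hbR : (2:ℝ) * 2 ^ b' ≤ 2 ^ b := by
    have : ((2:ℤ) ^ (b'+1) : ℤ) = 2 * 2 ^ b' := by ring
    exact_mod_cast this ▸ hble
  by_cases hc : r ≤ 2 ^ b - 1
  · rw [min_eq_left hc]
    push_cast
    rw [hxs]
    have hp : (0:ℝ) < (r:ℝ) - (2 ^ b' - 1) := by linarith
    have hq : (0:ℝ) < 2 * (x / s) - (2 ^ b' - 1) - (r:ℝ) := by linarith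
    nlinarith [mul_pos (mul_pos hs hs) (mul_pos hp hq)]
  · push_neg at hc
    rw [min_eq_right (by linarith : (2:ℤ)^b - 1 ≤ r)]
    have hcz : (2:ℤ) ^ b ≤ r := by linarith
    have hrM : (2:ℝ) ^ b ≤ (r : ℝ) := by exact_mod_cast hcz
    push_cast
    rw [hxs]
    have hp : (0:ℝ) < ((2:ℝ) ^ b - 1) - (2 ^ b' - 1) := by linarith
    have hq : (0:ℝ) < 2 * (x / s) - (2 ^ b' - 1) - ((2:ℝ) ^ b - 1) := by linarith
    nlinarith [mul_pos (mul_pos hs hs) (mul_pos hp hq)]
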